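/- Every homeomorphism Ψ : 𝕄* → 𝕄* induces a homeomorphism H_Ψ : ℕ* → ℕ* satisfying H_Ψ ∘ π = π ∘ Ψ; equivalently, Ψ(π⁻¹({u})) = π⁻¹({H_Ψ(u)}) for every u ∈ ℕ*. -/

import Mathlib

open Set Topology Filter

noncomputable section

/-- The unit interval `[0,1] ⊆ ℝ`. -/
abbrev UnitI : Type := Set.Icc (0:ℝ) 1

/-- The space `𝕄 = ℕ × [0,1]`. -/
abbrev Mspace : Type := ℕ × UnitI

/-- `β𝕄`, the Stone–Čech compactification of `𝕄`. -/
abbrev betaM : Type := StoneCech Mspace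

/-- The copy of `𝕄` inside `β𝕄`. -/
def Mcopy : Set betaM := Set.range (stoneCechUnit : Mspace → betaM)

/-- `𝕄* = β𝕄 ∖ 𝕄`. -/
def MstarS : Set betaM := Mcopyᶜ

/-- `βℕ`, realized as the space of ultrafilters on `ℕ`. -/
abbrev betaN : Type := Ultrafilter ℕ

/-- The copy of `ℕ` inside `βℕ` (the principal ultrafilters). -/
def Ncopy : Set betaN := Set.range (pure : ℕ → betaN)

/-- `ℕ* = βℕ ∖ ℕ`. -/
def NstarS : Set betaN := Ncopyᶜ

/-- The Stone extension `β𝕄 → βℕ` of the projection `ℕ × [0,1] → ℕ`. -/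
def piFull : betaM → betaN :=
  stoneCechExtend (g := fun p : Mspace => (pure p.1 : betaN))
    (continuous_of_discreteTopology.comp continuous_fst)

/-!
The fibres of `π` are connected: a fibre `π⁻¹{u}` is the limit along `u` of the segments
`{n} × [0,1]`, so a splitting of it into two disjoint open pieces would, by compactness, already
split almost all of these segments, and each segment is connected, so `u` chooses one piece and the
fibre lies in its closure. Since `ℕ*` is totally disconnected, `π ∘ Ψ` is therefore constant on the
fibres of `π`, and composing with the continuous section `u ↦ lim_u (n, 0)` of `π` gives `H_Ψ`;
`H_{Ψ⁻¹}` is its inverse.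
-/

open Function

theorem Homeomorph.exists_semiconj_of_isPreconnected_fiber {X Z : Type*} [TopologicalSpace X]
    [TopologicalSpace Z] [TotallyDisconnectedSpace Z] {q : X → Z} {σ : Z → X}
    (hq : Continuous q) (hσ : Continuous σ) (hqσ : LeftInverse q σ)
    (hfib : ∀ z, IsPreconnected (q ⁻¹' {z})) (Ψ : X ≃ₜ X) :
    ∃ H : Z ≃ₜ Z, Semiconj q Ψ H := by
  have descend (Φ : X ≃ₜ X) (x : X) : q (Φ (σ (q x))) = q (Φ x) :=
    ((hfib (q x)).image _ (hq.comp Φ.continuous).continuousOn).subsingleton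
      ⟨σ (q x), hqσ (q x), rfl⟩ ⟨x, rfl, rfl⟩
  refine ⟨
    { toFun := fun z => q (Ψ (σ z))
      invFun := fun z => q (Ψ.symm (σ z))
      left_inv := fun z => by simp only [descend, Homeomorph.symm_apply_apply, hqσ z]
      right_inv := fun z => by simp only [descend, Homeomorph.apply_symm_apply, hqσ z]
      continuous_toFun := hq.comp (Ψ.continuous.comp hσ)
      continuous_invFun := hq.comp (Ψ.symm.continuous.comp hσ) }, fun x => ?_⟩
  exact (descend Ψ x).symm

lemma continuous_piFull : Continuous piFull := continuous_stoneCechExtend _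

lemma piFull_stoneCechUnit (p : Mspace) : piFull (stoneCechUnit p) = pure p.1 :=
  congrFun (stoneCechExtend_extends _) p

def unitSegment (n : ℕ) : Set betaM := range fun t : UnitI => stoneCechUnit ((n, t) : Mspace)

lemma isPreconnected_unitSegment (n : ℕ) : IsPreconnected (unitSegment n) :=
  isPreconnected_range (continuous_stoneCechUnit.comp (Continuous.prodMk_right n))

lemma isCompact_unitSegment (n : ℕ) : IsCompact (unitSegment n) :=
  isCompact_range (continuous_stoneCechUnit.comp (Continuous.prodMk_right n))

lemma unitSegment_subset_piFull_preimage {A : Set ℕ} {n : ℕ} (hn : n ∈ A) :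
    unitSegment n ⊆ piFull ⁻¹' {v | A ∈ v} := by
  rintro - ⟨t, rfl⟩
  rw [mem_preimage, piFull_stoneCechUnit]
  exact hn

lemma mem_closure_iUnion_unitSegment {A : Set ℕ} {x : betaM} (hx : A ∈ piFull x) :
    x ∈ closure (⋃ n ∈ A, unitSegment n) := by
  have hcover : range (stoneCechUnit : Mspace → betaM) =
      (⋃ n ∈ A, unitSegment n) ∪ ⋃ n ∈ Aᶜ, unitSegment n := by
    ext y
    simp only [unitSegment, mem_range, mem_union, mem_iUnion, Prod.exists, exists_prop]
    constructor
    · rintro ⟨n, t, rfl⟩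
      by_cases hn : n ∈ A
      exacts [Or.inl ⟨n, hn, t, rfl⟩, Or.inr ⟨n, hn, t, rfl⟩]
    · rintro (⟨n, -, t, rfl⟩ | ⟨n, -, t, rfl⟩) <;> exact ⟨n, t, rfl⟩
  have hx' : x ∈ closure (range (stoneCechUnit : Mspace → betaM)) := by
    rw [denseRange_stoneCechUnit.closure_range]
    exact mem_univ x
  rw [hcover, closure_union] at hx'
  refine hx'.resolve_right fun hxc => Ultrafilter.compl_notMem_iff.2 hx ?_
  refine closure_minimal (iUnion₂_subset fun n hn => ?_)
    ((ultrafilter_isClosed_basic _).preimage continuous_piFull) hxc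
  exact unitSegment_subset_piFull_preimage hn

lemma piFull_preimage_subset_closure {u : betaN} {A : Set ℕ} (hA : A ∈ u) {W : Set betaM}
    (hW : ∀ n ∈ A, unitSegment n ⊆ W) : piFull ⁻¹' {u} ⊆ closure W := fun _ hx =>
  closure_mono (iUnion₂_subset hW) (mem_closure_iUnion_unitSegment ((mem_singleton_iff.1 hx) ▸ hA))

lemma mem_Mcopy_of_piFull_eq_pure {x : betaM} {n : ℕ} (hx : piFull x = pure n) : x ∈ Mcopy := by
  have hxn : x ∈ unitSegment n := by
    simpa only [mem_singleton_iff, iUnion_iUnion_eq_left,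
      (isCompact_unitSegment n).isClosed.closure_eq] using
      mem_closure_iUnion_unitSegment (A := {n}) (hx ▸ Ultrafilter.mem_pure.2 rfl)
  obtain ⟨t, rfl⟩ := hxn
  exact mem_range_self _

lemma mapsTo_piFull : MapsTo piFull MstarS NstarS := fun _ hx ⟨_, hn⟩ =>
  hx (mem_Mcopy_of_piFull_eq_pure hn.symm)

lemma piFull_preimage_subset_MstarS {u : betaN} (hu : u ∈ NstarS) : piFull ⁻¹' {u} ⊆ MstarS := by
  rintro x hx ⟨p, rfl⟩
  exact hu ⟨p.1, (piFull_stoneCechUnit p).symm.trans hx⟩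

lemma exists_mem_piFull_preimage_subset {u : betaN} {W : Set betaM} (hW : IsOpen W)
    (hsub : piFull ⁻¹' {u} ⊆ W) : ∃ B ∈ u, piFull ⁻¹' {v | B ∈ v} ⊆ W := by
  have : Nonempty {B // B ∈ u} := ⟨⟨univ, univ_mem⟩⟩
  have hdir : Directed (· ⊇ ·) fun B : {B // B ∈ u} => piFull ⁻¹' {v | B.1 ∈ v} :=
    fun B₁ B₂ => ⟨⟨B₁.1 ∩ B₂.1, inter_mem B₁.2 B₂.2⟩,
      fun _ hx => mem_of_superset hx inter_subset_left,
      fun _ hx => mem_of_superset hx inter_subset_right⟩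
  obtain ⟨B, hB⟩ := exists_subset_nhds_of_compactSpace hdir
    (fun B => (ultrafilter_isClosed_basic _).preimage continuous_piFull)
    (fun x hx => hW.mem_nhds (hsub (Ultrafilter.eq_of_le fun A hA => mem_iInter.1 hx ⟨A, hA⟩)))
  exact ⟨B.1, B.2, hB⟩

lemma piFull_preimage_subset_closure_or_subset_closure {u : betaN} {U V : Set betaM}
    (hU : IsOpen U) (hV : IsOpen V) (hUV : Disjoint U V) (hsub : piFull ⁻¹' {u} ⊆ U ∪ V) :
    piFull ⁻¹' {u} ⊆ closure U ∨ piFull ⁻¹' {u} ⊆ closure V := by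
  obtain ⟨B, hBu, hB⟩ := exists_mem_piFull_preimage_subset (hU.union hV) hsub
  have hsplit (n : ℕ) (hn : n ∈ B) : unitSegment n ⊆ U ∨ unitSegment n ⊆ V :=
    (isPreconnected_unitSegment n).subset_or_subset hU hV hUV
      ((unitSegment_subset_piFull_preimage hn).trans hB)
  set C : Set ℕ := {n | unitSegment n ⊆ U}
  rcases u.mem_or_compl_mem C with hC | hC
  · exact Or.inl (piFull_preimage_subset_closure hC fun _ hn => hn)
  · exact Or.inr (piFull_preimage_subset_closure (inter_mem hBu hC)
      fun n hn => (hsplit n hn.1).resolve_left hn.2)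

lemma isPreconnected_piFull_preimage (u : betaN) : IsPreconnected (piFull ⁻¹' {u}) := by
  rw [isPreconnected_iff_subset_of_fully_disjoint_closed
    (isClosed_singleton.preimage continuous_piFull)]
  intro F₁ F₂ hF₁ hF₂ hcover hdisj
  obtain ⟨U, V, hU, hV, hFU, hFV, hUV⟩ := normal_separation hF₁ hF₂ hdisj
  refine (piFull_preimage_subset_closure_or_subset_closure hU hV hUV
    (hcover.trans (union_subset_union hFU hFV))).imp (fun h x hx => ?_) (fun h x hx => ?_)
  · exact (hcover hx).resolve_right fun hx₂ =>
      disjoint_left.1 (hUV.closure_left hV) (h hx) (hFV hx₂)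
  · exact (hcover hx).resolve_left fun hx₁ =>
      disjoint_left.1 (hUV.closure_right hU) (hFU hx₁) (h hx)

lemma isPreconnected_piFull_restrict_preimage (u : NstarS) :
    IsPreconnected (mapsTo_piFull.restrict piFull MstarS NstarS ⁻¹' {u}) := by
  have himage : Subtype.val '' (mapsTo_piFull.restrict piFull MstarS NstarS ⁻¹' {u}) =
      piFull ⁻¹' {u.1} := by
    ext x
    refine ⟨?_, fun hx => ⟨⟨x, piFull_preimage_subset_MstarS u.2 hx⟩, Subtype.ext hx, rfl⟩⟩
    rintro ⟨y, hy, rfl⟩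
    exact congrArg Subtype.val hy
  rw [← IsInducing.subtypeVal.isPreconnected_image, himage]
  exact isPreconnected_piFull_preimage u

def piSection : betaN → betaM :=
  Ultrafilter.extend fun n : ℕ => stoneCechUnit ((n, 0) : Mspace)

lemma continuous_piSection : Continuous piSection := continuous_ultrafilter_extend _

lemma piFull_piSection (u : betaN) : piFull (piSection u) = u := by
  refine congrFun (denseRange_pure.equalizer (continuous_piFull.comp continuous_piSection)
    continuous_id (funext fun n => ?_)) u
  have hext : piSection (pure n) = stoneCechUnit ((n, 0) : Mspace) :=
    congrFun (ultrafilter_extend_extends _) n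
  rw [comp_apply, comp_apply, hext, piFull_stoneCechUnit]
  rfl

lemma mapsTo_piSection : MapsTo piSection NstarS MstarS := fun u hu =>
  piFull_preimage_subset_MstarS hu (piFull_piSection u)

/-- every homeomorphism `Ψ` of `𝕄*` induces a homeomorphism `H` of `ℕ*`
with `H ∘ π = π ∘ Ψ`. -/
theorem exists_induced_homeomorphism (Ψ : ↥MstarS ≃ₜ ↥MstarS) :
    ∃ H : ↥NstarS ≃ₜ ↥NstarS, ∀ p : ↥MstarS, ∃ hm : piFull (p : betaM) ∈ NstarS,
      ((H ⟨piFull (p : betaM), hm⟩ : ↥NstarS) : betaN) =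
        piFull ((Ψ p : ↥MstarS) : betaM) := by
  obtain ⟨H, hH⟩ := Homeomorph.exists_semiconj_of_isPreconnected_fiber
    (continuous_piFull.restrict mapsTo_piFull)
    (continuous_piSection.restrict mapsTo_piSection)
    (fun u => Subtype.ext (piFull_piSection u)) isPreconnected_piFull_restrict_preimage Ψ
  exact ⟨H, fun p => ⟨mapsTo_piFull p.2, congrArg Subtype.val (hH p).symm⟩⟩
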